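/- Let f : Fin n → ℝ[x₁,…,xₙ] be a polynomial vector field, p ∈ ℝ[x₁,…,xₙ], and let N ≥ 1 satisfy L^{N+1}_f p ∈ ⟨L¹_f p, …, L^N_f p⟩. Then for every a ∈ ℝⁿ, the following are equivalent: (1) a lies in the transverse set Trans_{p,f}, i.e., there exists k ≥ 1 with (L^j_f p)(a) = 0 for all 1 ≤ j < k and (L^k_f p)(a) < 0; (2) there exists i with 1 ≤ i ≤ N such that (L^j_f p)(a) = 0 for all 1 ≤ j < i and (L^i_f p)(a) < 0. -/
import Mathlib


open MvPolynomial

/-- Lie derivative of a polynomial along a polynomial vector field: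
`L_f p = Σᵢ (∂p/∂xᵢ)·fᵢ`. -/
noncomputable def lieDeriv {n : ℕ} (f : Fin n → MvPolynomial (Fin n) ℝ)
    (p : MvPolynomial (Fin n) ℝ) : MvPolynomial (Fin n) ℝ :=
  ∑ i, pderiv i p * f i

lemma lieDeriv_add {n : ℕ} (f : Fin n → MvPolynomial (Fin n) ℝ)
    (q r : MvPolynomial (Fin n) ℝ) :
    lieDeriv f (q + r) = lieDeriv f q + lieDeriv f r := by
  simp [lieDeriv, add_mul, Finset.sum_add_distrib]

lemma lieDeriv_mul {n : ℕ} (f : Fin n → MvPolynomial (Fin n) ℝ)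
    (q r : MvPolynomial (Fin n) ℝ) :
    lieDeriv f (q * r) = lieDeriv f q * r + q * lieDeriv f r := by
  unfold lieDeriv
  simp only [pderiv_mul, add_mul, Finset.sum_add_distrib, Finset.sum_mul, Finset.mul_sum]
  congr 1
  · apply Finset.sum_congr rfl; intros; ring
  · apply Finset.sum_congr rfl; intros; ring

lemma lieDeriv_zero {n : ℕ} (f : Fin n → MvPolynomial (Fin n) ℝ) :
    lieDeriv f 0 = 0 := by
  simp [lieDeriv]

/-- A derivation maps an ideal into itself provided it maps each generator into it. -/
lemma lieDeriv_mem_span {n : ℕ} (f : Fin n → MvPolynomial (Fin n) ℝ)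
    (S : Set (MvPolynomial (Fin n) ℝ))
    (hS : ∀ g ∈ S, lieDeriv f g ∈ Ideal.span S)
    {q : MvPolynomial (Fin n) ℝ} (hq : q ∈ Ideal.span S) :
    lieDeriv f q ∈ Ideal.span S := by
  refine Submodule.span_induction ?_ ?_ ?_ ?_ hq
  · exact hS
  · rw [lieDeriv_zero]; exact (Ideal.span S).zero_mem
  · intro x y _ _ hpx hpy
    rw [lieDeriv_add]
    exact (Ideal.span S).add_mem hpx hpy
  · intro r x hx hpx
    have : lieDeriv f (r * x) = lieDeriv f r * x + r * lieDeriv f x := lieDeriv_mul f r x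
    simp only [smul_eq_mul, this]
    exact (Ideal.span S).add_mem (Ideal.mul_mem_left _ _ hx) (Ideal.mul_mem_left _ _ hpx)

/-- Computability of the transverse set: under `L^{N+1}_f p ∈ ⟨L¹_f p, …, L^N_f p⟩`,
a point `a` lies in `Trans_{p,f}` iff there is `1 ≤ i ≤ N` with
`(L^j_f p)(a) = 0` for `1 ≤ j < i` and `(L^i_f p)(a) < 0`. -/
theorem transverse_set_characterization {n : ℕ} (f : Fin n → MvPolynomial (Fin n) ℝ)
    (p : MvPolynomial (Fin n) ℝ) (N : ℕ) (hN : 1 ≤ N)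
    (h : (lieDeriv f)^[N + 1] p ∈
      Ideal.span ((fun j => (lieDeriv f)^[j] p) '' Set.Icc 1 N))
    (a : Fin n → ℝ) :
    (∃ k, 1 ≤ k ∧ (∀ j, 1 ≤ j → j < k → eval a ((lieDeriv f)^[j] p) = 0) ∧
        eval a ((lieDeriv f)^[k] p) < 0) ↔
    (∃ i, 1 ≤ i ∧ i ≤ N ∧ (∀ j, 1 ≤ j → j < i → eval a ((lieDeriv f)^[j] p) = 0) ∧
        eval a ((lieDeriv f)^[i] p) < 0) := by
  set S : Set (MvPolynomial (Fin n) ℝ) := (fun j => (lieDeriv f)^[j] p) '' Set.Icc 1 N with hSdef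
  set I : Ideal (MvPolynomial (Fin n) ℝ) := Ideal.span S with hIdef
  have hS : ∀ g ∈ S, lieDeriv f g ∈ I := by
    rintro g ⟨j, ⟨hj1, hjN⟩, rfl⟩
    have : lieDeriv f ((lieDeriv f)^[j] p) = (lieDeriv f)^[j + 1] p :=
      (Function.iterate_succ_apply' (lieDeriv f) j p).symm
    rw [this]
    rcases lt_or_eq_of_le hjN with hlt | heq
    · exact Ideal.subset_span ⟨j + 1, ⟨Nat.le_succ_of_le hj1, hlt⟩, rfl⟩
    · rw [heq]; exact h
  have key : ∀ m, N + 1 ≤ m → (lieDeriv f)^[m] p ∈ I := by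
    intro m hm
    induction m with
    | zero => omega
    | succ m ih =>
      rcases Nat.lt_or_ge (N + 1) (m + 1) with hlt | hge
      · have hm' : N + 1 ≤ m := by omega
        rw [Function.iterate_succ_apply']
        exact lieDeriv_mem_span f S hS (ih hm')
      · have : m + 1 = N + 1 := by omega
        rw [this]; exact h
  constructor
  · rintro ⟨k, hk1, hzero, hneg⟩
    rcases Nat.lt_or_ge N k with hlt | hge
    · -- all generators vanish at a, so L^k p(a) = 0: contradiction
      exfalso
      have hSker : ∀ g ∈ S, eval a g = 0 := by
        rintro g ⟨j, ⟨hj1, hjN⟩, rfl⟩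
        exact hzero j hj1 (lt_of_le_of_lt hjN hlt)
      have hker : I ≤ RingHom.ker (eval a) := by
        rw [hIdef, Ideal.span_le]
        intro g hg
        exact hSker g hg
      have : eval a ((lieDeriv f)^[k] p) = 0 := hker (key k (by omega))
      linarith
    · exact ⟨k, hk1, hge, hzero, hneg⟩
  · rintro ⟨i, hi1, _, hzero, hneg⟩
    exact ⟨i, hi1, hzero, hneg⟩
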